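/- Let G be a finite simple graph on a vertex set V with |V| = n ≥ 4 and with m edges, and let c = (c_1, …, c_s) be a profile. Under the random coloring model with profile c, for any two distinct colors i ≠ j in {1, …, s}, cov(M_i, M_j) = γ(G) · c_i^(2) · c_j^(2), where γ(G) = (2/n^(4))·( binom(m,2) − π₃(G) ) − ( m/n^(2) )². -/

import Mathlib

open Finset

/-- The set of colorings of `V` with `s` colors and profile `c` (fiber of color `i` has `c i`
vertices). -/
def profileColorings (V : Type*) [Fintype V] [DecidableEq V] (s : ℕ) (c : Fin s → ℕ) :
    Finset (V → Fin s) :=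
  Finset.univ.filter fun f => ∀ i, (Finset.univ.filter fun v => f v = i).card = c i

/-- `monoEdges G f i` is the number of edges of `G` both of whose endpoints get color `i`
under `f`. -/
def monoEdges {V : Type*} [Fintype V] [DecidableEq V] (G : SimpleGraph V) [DecidableRel G.Adj]
    {s : ℕ} (f : V → Fin s) (i : Fin s) : ℕ :=
  (G.edgeFinset.filter fun e => ∀ v ∈ e, f v = i).card

/-- Number of unordered pairs of distinct edges of `G` sharing a vertex. -/
def pi3 {V : Type*} [Fintype V] [DecidableEq V] (G : SimpleGraph V) [DecidableRel G.Adj] : ℕ :=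
  ((G.edgeFinset.powersetCard 2).filter fun p => ∃ v, ∀ e ∈ p, v ∈ e).card

/-- The invariant `γ(G)`. -/
noncomputable def gammaG {V : Type*} [Fintype V] [DecidableEq V] (G : SimpleGraph V)
    [DecidableRel G.Adj] : ℝ :=
  2 / ((Fintype.card V).descFactorial 4) * ((G.edgeFinset.card.choose 2 : ℝ) - pi3 G)
    - ((G.edgeFinset.card : ℝ) / ((Fintype.card V).descFactorial 2)) ^ 2

/-- Expectation under the uniform measure on colorings of profile `c` (random coloring model). -/
noncomputable def expect (V : Type*) [Fintype V] [DecidableEq V] {s : ℕ} (c : Fin s → ℕ)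
    (X : (V → Fin s) → ℝ) : ℝ :=
  (∑ f ∈ profileColorings V s c, X f) / (profileColorings V s c).card


lemma expect_eq (V : Type*) [Fintype V] [DecidableEq V] {s : ℕ} (c : Fin s → ℕ)
    (X : (V → Fin s) → ℝ) :
    _root_.expect V c X
      = (∑ f ∈ profileColorings V s c, X f) / (profileColorings V s c).card := rfl

/-- Extend matching of injective tuples to a permutation. -/
lemma exists_perm_extend {V : Type*} [Fintype V] [DecidableEq V] {k : ℕ}
    (u w : Fin k → V) (hu : Function.Injective u) (hw : Function.Injective w) :
    ∃ σ : Equiv.Perm V, ∀ t, σ (w t) = u t := by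
  classical
  set S : Finset V := Finset.image w Finset.univ with hS
  set f : V → V := fun v => if h : ∃ t, w t = v then u h.choose else v with hf
  have hfw : ∀ t, f (w t) = u t := by
    intro t
    have h : ∃ t', w t' = w t := ⟨t, rfl⟩
    have : h.choose = t := hw h.choose_spec
    simp [hf, dif_pos h, this]
  have himg : Finset.image f S ⊆ Finset.univ := Finset.subset_univ _
  have hinj : Set.InjOn f S := by
    intro a ha b hb hab
    simp only [hS, Finset.coe_image, Set.mem_image] at ha hb
    obtain ⟨ta, -, rfl⟩ := ha
    obtain ⟨tb, -, rfl⟩ := hb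
    rw [hfw, hfw] at hab
    exact congrArg w (hu hab)
  obtain ⟨g, hg⟩ := Finset.exists_equiv_extend_of_card_eq (t := (Finset.univ : Finset V))
    (by simp) himg hinj
  refine ⟨g.trans (Equiv.subtypeUnivEquiv (by simp)), fun t => ?_⟩
  have := hg (w t) (by simp [hS])
  simp only [Equiv.trans_apply, Equiv.subtypeUnivEquiv_apply]
  rw [this, hfw]

section Aux
variable {V : Type*} [Fintype V] [DecidableEq V] {s : ℕ} {c : Fin s → ℕ}


lemma mem_profileColorings_iff {f : V → Fin s} :
    f ∈ profileColorings V s c ↔ ∀ i, (Finset.univ.filter fun v => f v = i).card = c i := by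
  simp [profileColorings]

lemma comp_perm_mem (σ : Equiv.Perm V) {f : V → Fin s} (hf : f ∈ profileColorings V s c) :
    f ∘ σ ∈ profileColorings V s c := by
  rw [mem_profileColorings_iff] at hf ⊢
  intro i
  rw [← hf i]
  apply Finset.card_bij' (fun v _ => σ v) (fun v _ => σ.symm v) <;> simp [Function.comp]

lemma inj2 {a b : V} (hab : a ≠ b) : Function.Injective ![a, b] := by
  intro t t' h
  fin_cases t <;> fin_cases t' <;> simp_all <;> exact absurd h.symm hab

lemma inj4 {a b x y : V} (hab : a ≠ b) (hax : a ≠ x) (hay : a ≠ y) (hbx : b ≠ x)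
    (hby : b ≠ y) (hxy : x ≠ y) : Function.Injective ![a, b, x, y] := by
  intro t t' h
  fin_cases t <;> fin_cases t' <;> simp_all <;> first
    | exact absurd h.symm hab | exact absurd h.symm hax | exact absurd h.symm hay
    | exact absurd h.symm hbx | exact absurd h.symm hby | exact absurd h.symm hxy

lemma transport4 {a b x y a' b' x' y' : V}
    (h : Function.Injective ![a, b, x, y]) (h' : Function.Injective ![a', b', x', y'])
    (i1 i2 i3 i4 : Fin s) :
    ((profileColorings V s c).filter fun f => f a = i1 ∧ f b = i2 ∧ f x = i3 ∧ f y = i4).card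
      = ((profileColorings V s c).filter fun f =>
          f a' = i1 ∧ f b' = i2 ∧ f x' = i3 ∧ f y' = i4).card := by
  obtain ⟨σ, hσ⟩ := exists_perm_extend ![a, b, x, y] ![a', b', x', y'] h h'
  have h0 := hσ 0; have h1 := hσ 1; have h2 := hσ 2; have h3 := hσ 3
  simp only [Matrix.cons_val_zero, Matrix.cons_val_one, Matrix.head_cons,
    Matrix.cons_val_two, Matrix.tail_cons, Matrix.cons_val_three] at h0 h1 h2 h3
  apply Finset.card_bij' (fun f _ => f ∘ σ) (fun f _ => f ∘ σ.symm)
  · intro f hf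
    simp only [Finset.mem_filter] at hf ⊢
    obtain ⟨hfm, c1, c2, c3, c4⟩ := hf
    exact ⟨comp_perm_mem σ hfm, by simp [Function.comp, h0, c1], by simp [Function.comp, h1, c2],
      by simp [Function.comp, h2, c3], by simp [Function.comp, h3, c4]⟩
  · intro f hf
    simp only [Finset.mem_filter] at hf ⊢
    obtain ⟨hfm, c1, c2, c3, c4⟩ := hf
    have e0 : σ.symm a = a' := by rw [← h0, Equiv.symm_apply_apply]
    have e1 : σ.symm b = b' := by rw [← h1, Equiv.symm_apply_apply]
    have e2 : σ.symm x = x' := by rw [← h2, Equiv.symm_apply_apply]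
    have e3 : σ.symm y = y' := by rw [← h3, Equiv.symm_apply_apply]
    exact ⟨comp_perm_mem σ.symm hfm, by simp [Function.comp, e0, c1],
      by simp [Function.comp, e1, c2], by simp [Function.comp, e2, c3],
      by simp [Function.comp, e3, c4]⟩
  · intro f _; ext v; simp
  · intro f _; ext v; simp

lemma transport2 {a b a' b' : V} (hab : a ≠ b) (hab' : a' ≠ b') (i1 i2 : Fin s) :
    ((profileColorings V s c).filter fun f => f a = i1 ∧ f b = i2).card
      = ((profileColorings V s c).filter fun f => f a' = i1 ∧ f b' = i2).card := by
  obtain ⟨σ, hσ⟩ := exists_perm_extend ![a, b] ![a', b'] (inj2 hab) (inj2 hab')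
  have h0 := hσ 0; have h1 := hσ 1
  simp only [Matrix.cons_val_zero, Matrix.cons_val_one, Matrix.head_cons] at h0 h1
  apply Finset.card_bij' (fun f _ => f ∘ σ) (fun f _ => f ∘ σ.symm)
  · intro f hf
    simp only [Finset.mem_filter] at hf ⊢
    obtain ⟨hfm, c1, c2⟩ := hf
    exact ⟨comp_perm_mem σ hfm, by simp [Function.comp, h0, c1], by simp [Function.comp, h1, c2]⟩
  · intro f hf
    simp only [Finset.mem_filter] at hf ⊢
    obtain ⟨hfm, c1, c2⟩ := hf
    have e0 : σ.symm a = a' := by rw [← h0, Equiv.symm_apply_apply]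
    have e1 : σ.symm b = b' := by rw [← h1, Equiv.symm_apply_apply]
    exact ⟨comp_perm_mem σ.symm hfm, by simp [Function.comp, e0, c1],
      by simp [Function.comp, e1, c2]⟩
  · intro f _; ext v; simp
  · intro f _; ext v; simp

lemma sum_card_filter_comm {α β : Type*} [DecidableEq α] [DecidableEq β]
    (s : Finset α) (t : Finset β) (p : α → β → Prop) [∀ a b, Decidable (p a b)] :
    ∑ a ∈ s, (t.filter (p a)).card = ∑ b ∈ t, (s.filter (fun a => p a b)).card := by
  simp only [Finset.card_filter]
  rw [Finset.sum_comm]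

/-- The finset of pairwise-distinct quadruples. -/
def quadSet (V : Type*) [Fintype V] [DecidableEq V] : Finset (V × V × V × V) :=
  Finset.univ.filter fun q => q.1 ≠ q.2.1 ∧ q.1 ≠ q.2.2.1 ∧ q.1 ≠ q.2.2.2 ∧
    q.2.1 ≠ q.2.2.1 ∧ q.2.1 ≠ q.2.2.2 ∧ q.2.2.1 ≠ q.2.2.2

lemma quadSet_card : (quadSet V).card = (Fintype.card V).descFactorial 4 := by
  have : (quadSet V).card = Fintype.card (Fin 4 ↪ V) := by
    rw [← Finset.card_univ]
    apply Finset.card_bij'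
      (i := fun q (hq : q ∈ quadSet V) => (⟨![q.1, q.2.1, q.2.2.1, q.2.2.2], by
        simp only [quadSet, Finset.mem_filter] at hq
        exact inj4 hq.2.1 hq.2.2.1 hq.2.2.2.1 hq.2.2.2.2.1 hq.2.2.2.2.2.1
          hq.2.2.2.2.2.2⟩ : Fin 4 ↪ V))
      (j := fun g _ => (g 0, g 1, g 2, g 3))
    case hi => intro q hq; exact Finset.mem_univ _
    case hj =>
      intro g _
      simp only [quadSet, Finset.mem_filter]
      refine ⟨Finset.mem_univ _, ?_, ?_, ?_, ?_, ?_, ?_⟩ <;> exact g.injective.ne (by decide)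
    case left_inv => intro q hq; rfl
    case right_inv => intro g _; ext t; fin_cases t <;> simp
  rw [this, Fintype.card_embedding_eq, Fintype.card_fin]

lemma offDiag_filter_eq (f : V → Fin s) (i : Fin s) :
    (Finset.univ : Finset V).offDiag.filter (fun p => f p.1 = i ∧ f p.2 = i)
      = (Finset.univ.filter fun v => f v = i).offDiag := by
  ext p
  simp only [Finset.mem_filter, Finset.mem_offDiag, Finset.mem_univ, true_and]
  tauto

lemma descFactorial_two' (n : ℕ) : n.descFactorial 2 = n * n - n := by
  simp [Nat.descFactorial_succ, Nat.descFactorial_zero]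
  cases n with
  | zero => rfl
  | succ k => simp [Nat.succ_sub_one]; ring_nf; omega

lemma perF_pair (f : V → Fin s) (hf : f ∈ profileColorings V s c) (i : Fin s) :
    ((Finset.univ : Finset V).offDiag.filter (fun p => f p.1 = i ∧ f p.2 = i)).card
      = (c i).descFactorial 2 := by
  rw [offDiag_filter_eq, Finset.offDiag_card, mem_profileColorings_iff.mp hf i,
    descFactorial_two']

lemma pair_count {a b : V} (hab : a ≠ b) (i : Fin s) :
    ((profileColorings V s c).filter fun f => f a = i ∧ f b = i).card
        * (Fintype.card V).descFactorial 2
      = (profileColorings V s c).card * (c i).descFactorial 2 := by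
  have key : ∑ p ∈ (Finset.univ : Finset V).offDiag,
      ((profileColorings V s c).filter fun f => f p.1 = i ∧ f p.2 = i).card
      = (profileColorings V s c).card * (c i).descFactorial 2 := by
    rw [← sum_card_filter_comm]
    rw [Finset.sum_congr rfl (fun f hf => perF_pair f (by simpa using hf) i)]
    simp [mul_comm]
  have const : ∀ p ∈ (Finset.univ : Finset V).offDiag,
      ((profileColorings V s c).filter fun f => f p.1 = i ∧ f p.2 = i).card
      = ((profileColorings V s c).filter fun f => f a = i ∧ f b = i).card := by
    intro p hp
    rw [Finset.mem_offDiag] at hp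
    exact transport2 hp.2.2 hab i i
  rw [Finset.sum_congr rfl const, Finset.sum_const, smul_eq_mul,
    Finset.offDiag_card, Finset.card_univ, mul_comm, ← descFactorial_two'] at key
  exact key

lemma perF_quad (f : V → Fin s) (hf : f ∈ profileColorings V s c) {i j : Fin s} (hij : i ≠ j) :
    ((quadSet V).filter (fun q => f q.1 = i ∧ f q.2.1 = i ∧ f q.2.2.1 = j ∧ f q.2.2.2 = j)).card
      = (c i).descFactorial 2 * (c j).descFactorial 2 := by
  have : ((quadSet V).filter
        (fun q => f q.1 = i ∧ f q.2.1 = i ∧ f q.2.2.1 = j ∧ f q.2.2.2 = j)).card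
      = ((Finset.univ.filter fun v => f v = i).offDiag
          ×ˢ (Finset.univ.filter fun v => f v = j).offDiag).card := by
    apply Finset.card_bij'
      (i := fun q _ => ((q.1, q.2.1), (q.2.2.1, q.2.2.2)))
      (j := fun r _ => (r.1.1, r.1.2, r.2.1, r.2.2))
    case hi =>
      intro q hq
      simp only [quadSet, Finset.mem_filter, Finset.mem_univ, true_and,
        Finset.mem_product, Finset.mem_offDiag] at hq ⊢
      tauto
    case hj =>
      intro r hr
      simp only [quadSet, Finset.mem_filter, Finset.mem_univ, true_and,
        Finset.mem_product, Finset.mem_offDiag] at hr ⊢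
      obtain ⟨⟨ha, hb, hab⟩, hx, hy, hxy⟩ := hr
      exact ⟨⟨hab, fun h => hij (by rw [← ha, h, hx]), fun h => hij (by rw [← ha, h, hy]),
        fun h => hij (by rw [← hb, h, hx]), fun h => hij (by rw [← hb, h, hy]), hxy⟩,
        ha, hb, hx, hy⟩
    case left_inv => intro q hq; rfl
    case right_inv => intro r hr; rfl
  rw [this, Finset.card_product, Finset.offDiag_card, Finset.offDiag_card,
    mem_profileColorings_iff.mp hf i, mem_profileColorings_iff.mp hf j,
    descFactorial_two', descFactorial_two']

lemma quad_count {a b x y : V} (h : Function.Injective ![a, b, x, y]) {i j : Fin s}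
    (hij : i ≠ j) :
    ((profileColorings V s c).filter fun f => f a = i ∧ f b = i ∧ f x = j ∧ f y = j).card
        * (Fintype.card V).descFactorial 4
      = (profileColorings V s c).card * ((c i).descFactorial 2 * (c j).descFactorial 2) := by
  have key : ∑ q ∈ quadSet V,
      ((profileColorings V s c).filter fun f =>
        f q.1 = i ∧ f q.2.1 = i ∧ f q.2.2.1 = j ∧ f q.2.2.2 = j).card
      = (profileColorings V s c).card * ((c i).descFactorial 2 * (c j).descFactorial 2) := by
    rw [← sum_card_filter_comm]
    rw [Finset.sum_congr rfl (fun f hf => perF_quad f (by simpa using hf) hij)]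
    simp [mul_comm]
  have const : ∀ q ∈ quadSet V,
      ((profileColorings V s c).filter fun f =>
        f q.1 = i ∧ f q.2.1 = i ∧ f q.2.2.1 = j ∧ f q.2.2.2 = j).card
      = ((profileColorings V s c).filter fun f =>
          f a = i ∧ f b = i ∧ f x = j ∧ f y = j).card := by
    intro q hq
    simp only [quadSet, Finset.mem_filter, Finset.mem_univ, true_and] at hq
    exact transport4 (inj4 hq.1 hq.2.1 hq.2.2.1 hq.2.2.2.1 hq.2.2.2.2.1 hq.2.2.2.2.2) h i i j j
  rw [Finset.sum_congr rfl const, Finset.sum_const, smul_eq_mul, quadSet_card, mul_comm] at key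
  exact key

lemma profileColorings_nonempty (hsum : ∑ i, c i = Fintype.card V) :
    (profileColorings V s c).Nonempty := by
  classical
  have hcard : Fintype.card (Σ i : Fin s, Fin (c i)) = Fintype.card V := by
    simp [Fintype.card_sigma, hsum]
  obtain ⟨e⟩ := Fintype.card_eq.mp hcard
  refine ⟨fun v => (e.symm v).1, mem_profileColorings_iff.mpr fun i => ?_⟩
  have h1 : (Finset.univ.filter fun v : V => (e.symm v).1 = i).card
      = (Finset.univ.filter fun x : Σ i : Fin s, Fin (c i) => x.1 = i).card := by
    apply Finset.card_bij' (fun v _ => e.symm v) (fun x _ => e x) <;> simp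
  have h2 : (Finset.univ.filter fun x : Σ i : Fin s, Fin (c i) => x.1 = i)
      = Finset.univ.map ⟨Sigma.mk i, sigma_mk_injective⟩ := by
    ext ⟨i', k⟩
    simp only [Finset.mem_filter, Finset.mem_univ, true_and, Finset.mem_map,
      Function.Embedding.coeFn_mk]
    constructor
    · rintro rfl; exact ⟨k, rfl⟩
    · rintro ⟨k', h⟩; cases h; rfl
  rw [h1, h2, Finset.card_map, Finset.card_univ, Fintype.card_fin]


section Edges
variable (G : SimpleGraph V) [DecidableRel G.Adj]

lemma edge_rep {e : Sym2 V} (he : e ∈ G.edgeFinset) : ∃ a b : V, a ≠ b ∧ e = s(a, b) := by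
  obtain ⟨⟨a, b⟩, rfl⟩ := e.exists_rep
  exact ⟨a, b, (SimpleGraph.mem_edgeFinset.mp he).ne, rfl⟩

lemma cond_pair_eq (a b : V) (i : Fin s) :
    ((profileColorings V s c).filter fun f => ∀ v ∈ s(a, b), f v = i)
      = (profileColorings V s c).filter fun f => f a = i ∧ f b = i := by
  ext f
  simp [Sym2.mem_iff, or_imp, forall_and, forall_eq]

lemma sum_monoEdges_mul (i : Fin s) :
    (∑ f ∈ profileColorings V s c, monoEdges G f i) * (Fintype.card V).descFactorial 2
      = G.edgeFinset.card * ((profileColorings V s c).card * (c i).descFactorial 2) := by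
  have hsw : ∑ f ∈ profileColorings V s c, monoEdges G f i
      = ∑ e ∈ G.edgeFinset, ((profileColorings V s c).filter fun f => ∀ v ∈ e, f v = i).card :=
    sum_card_filter_comm _ _ _
  rw [hsw, Finset.sum_mul]
  rw [Finset.sum_congr rfl (fun e he => ?_), Finset.sum_const, smul_eq_mul]
  obtain ⟨a, b, hab, rfl⟩ := edge_rep G he
  rw [cond_pair_eq, pair_count hab]

/-- Ordered pairs of disjoint edges. -/
def disjPairs : Finset (Sym2 V × Sym2 V) :=
  (G.edgeFinset ×ˢ G.edgeFinset).filter fun p => ¬∃ v, v ∈ p.1 ∧ v ∈ p.2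

lemma sum_prod_mul {i j : Fin s} (hij : i ≠ j) :
    (∑ f ∈ profileColorings V s c, monoEdges G f i * monoEdges G f j)
        * (Fintype.card V).descFactorial 4
      = (disjPairs G).card
        * ((profileColorings V s c).card * ((c i).descFactorial 2 * (c j).descFactorial 2)) := by
  classical
  have hprod : ∀ f : V → Fin s, monoEdges G f i * monoEdges G f j
      = ((G.edgeFinset ×ˢ G.edgeFinset).filter fun p =>
          (∀ v ∈ p.1, f v = i) ∧ (∀ v ∈ p.2, f v = j)).card := by
    intro f
    rw [monoEdges, monoEdges, ← Finset.card_product]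
    congr 1
    exact (Finset.filter_product (fun e => ∀ v ∈ e, f v = i) (fun e => ∀ v ∈ e, f v = j)).symm
  have hsw : ∑ f ∈ profileColorings V s c, monoEdges G f i * monoEdges G f j
      = ∑ p ∈ G.edgeFinset ×ˢ G.edgeFinset,
          ((profileColorings V s c).filter fun f =>
            (∀ v ∈ p.1, f v = i) ∧ (∀ v ∈ p.2, f v = j)).card := by
    rw [Finset.sum_congr rfl fun f _ => hprod f]
    exact sum_card_filter_comm _ _ _
  have hzero : ∀ p ∈ (G.edgeFinset ×ˢ G.edgeFinset).filter
      (fun p => ∃ v, v ∈ p.1 ∧ v ∈ p.2),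
      ((profileColorings V s c).filter fun f =>
        (∀ v ∈ p.1, f v = i) ∧ (∀ v ∈ p.2, f v = j)).card = 0 := by
    intro p hp
    rw [Finset.mem_filter] at hp
    obtain ⟨-, v, hv1, hv2⟩ := hp
    rw [Finset.card_eq_zero, Finset.filter_eq_empty_iff]
    rintro f -
    rintro ⟨h1, h2⟩
    exact hij ((h1 v hv1).symm.trans (h2 v hv2))
  rw [hsw, ← Finset.sum_filter_add_sum_filter_not (G.edgeFinset ×ˢ G.edgeFinset)
    (fun p => ∃ v, v ∈ p.1 ∧ v ∈ p.2), Finset.sum_congr rfl hzero]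
  simp only [Finset.sum_const, smul_eq_mul, mul_zero, zero_add]
  rw [show (G.edgeFinset ×ˢ G.edgeFinset).filter (fun p => ¬∃ v, v ∈ p.1 ∧ v ∈ p.2)
    = disjPairs G from rfl]
  rw [Finset.sum_mul]
  rw [Finset.sum_congr rfl (fun p hp => ?_), Finset.sum_const, smul_eq_mul]
  simp only [disjPairs, Finset.mem_filter, Finset.mem_product] at hp
  obtain ⟨⟨he1, he2⟩, hdisj⟩ := hp
  obtain ⟨a, b, hab, h1⟩ := edge_rep G he1
  obtain ⟨x, y, hxy, h2⟩ := edge_rep G he2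
  rw [h1, h2] at hdisj ⊢
  have hax : a ≠ x := fun h => hdisj ⟨a, by simp, by simp [h]⟩
  have hay : a ≠ y := fun h => hdisj ⟨a, by simp, by simp [h]⟩
  have hbx : b ≠ x := fun h => hdisj ⟨b, by simp, by simp [h]⟩
  have hby : b ≠ y := fun h => hdisj ⟨b, by simp, by simp [h]⟩
  have hcond : ((profileColorings V s c).filter fun f =>
      (∀ v ∈ s(a, b), f v = i) ∧ (∀ v ∈ s(x, y), f v = j))
      = (profileColorings V s c).filter fun f => f a = i ∧ f b = i ∧ f x = j ∧ f y = j := by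
    ext f
    simp [Sym2.mem_iff, or_imp, forall_and, forall_eq, and_assoc]
  rw [hcond, quad_count (inj4 hab hax hay hbx hby hxy) hij]

lemma disjPairs_card :
    (disjPairs G).card + (G.edgeFinset.card + 2 * pi3 G)
      = G.edgeFinset.card * G.edgeFinset.card := by
  classical
  set E := G.edgeFinset with hE
  set S := (E ×ˢ E).filter (fun p => ∃ v, v ∈ p.1 ∧ v ∈ p.2) with hS
  have htot : S.card + (disjPairs G).card = E.card * E.card := by
    rw [← Finset.card_product E E]
    exact Finset.card_filter_add_card_filter_not _
  have hdiag : (S.filter fun p => p.1 = p.2).card = E.card := by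
    apply Finset.card_bij' (i := fun p (_ : p ∈ S.filter fun p => p.1 = p.2) => p.1)
      (j := fun e (_ : e ∈ E) => (e, e))
    case hi =>
      intro p hp
      simp only [hS, Finset.mem_filter, Finset.mem_product] at hp
      exact hp.1.1.1
    case hj =>
      intro e he
      obtain ⟨a, b, hab, rfl⟩ := edge_rep G (hE ▸ he)
      simp only [hS, Finset.mem_filter, Finset.mem_product]
      exact ⟨⟨⟨he, he⟩, a, by simp, by simp⟩, trivial⟩
    case left_inv =>
      intro p hp
      simp only [Finset.mem_filter] at hp
      exact Prod.ext rfl hp.2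
    case right_inv => intro e he; rfl
  have hoff : (S.filter fun p => p.1 ≠ p.2).card = 2 * pi3 G := by
    set T := (E.powersetCard 2).filter (fun q => ∃ v, ∀ e ∈ q, v ∈ e) with hT
    have hmap : ∀ p ∈ S.filter (fun p => p.1 ≠ p.2),
        ({p.1, p.2} : Finset (Sym2 V)) ∈ T := by
      intro p hp
      simp only [hS, Finset.mem_filter, Finset.mem_product] at hp
      obtain ⟨⟨⟨h1, h2⟩, v, hv1, hv2⟩, hne⟩ := hp
      simp only [hT, Finset.mem_filter, Finset.mem_powersetCard]
      refine ⟨⟨?_, ?_⟩, v, ?_⟩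
      · intro e he
        simp only [Finset.mem_insert, Finset.mem_singleton] at he
        rcases he with rfl | rfl <;> assumption
      · rw [Finset.card_insert_of_notMem (by simpa using hne), Finset.card_singleton]
      · intro e he
        simp only [Finset.mem_insert, Finset.mem_singleton] at he
        rcases he with rfl | rfl <;> assumption
    rw [Finset.card_eq_sum_card_fiberwise hmap]
    have hfib : ∀ q ∈ T,
        ((S.filter fun p => p.1 ≠ p.2).filter fun p => ({p.1, p.2} : Finset (Sym2 V)) = q).card
          = 2 := by
      intro q hq
      simp only [hT, Finset.mem_filter, Finset.mem_powersetCard] at hq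
      obtain ⟨⟨hqE, hq2⟩, v, hv⟩ := hq
      obtain ⟨e1, e2, hne, rfl⟩ := Finset.card_eq_two.mp hq2
      have hset : ((S.filter fun p => p.1 ≠ p.2).filter
          fun p => ({p.1, p.2} : Finset (Sym2 V)) = {e1, e2})
          = {(e1, e2), (e2, e1)} := by
        ext p
        simp only [Finset.mem_filter, Finset.mem_insert, Finset.mem_singleton]
        constructor
        · rintro ⟨⟨hpS, hpne⟩, hpq⟩
          have h1 : p.1 ∈ ({e1, e2} : Finset (Sym2 V)) := by rw [← hpq]; simp
          have h2 : p.2 ∈ ({e1, e2} : Finset (Sym2 V)) := by rw [← hpq]; simp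
          simp only [Finset.mem_insert, Finset.mem_singleton] at h1 h2
          rcases h1 with h1 | h1
          · rcases h2 with h2 | h2
            · exact absurd (h1.trans h2.symm) hpne
            · exact Or.inl (Prod.ext h1 h2)
          · rcases h2 with h2 | h2
            · exact Or.inr (Prod.ext h1 h2)
            · exact absurd (h1.trans h2.symm) hpne
        · have hm1 : e1 ∈ E := hqE (by simp)
          have hm2 : e2 ∈ E := hqE (by simp)
          have hv1 : v ∈ e1 := hv e1 (by simp)
          have hv2 : v ∈ e2 := hv e2 (by simp)
          rintro (rfl | rfl)
          · refine ⟨⟨?_, hne⟩, rfl⟩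
            simp only [hS, Finset.mem_filter, Finset.mem_product]
            exact ⟨⟨hm1, hm2⟩, v, hv1, hv2⟩
          · refine ⟨⟨?_, hne.symm⟩, Finset.pair_comm e2 e1⟩
            simp only [hS, Finset.mem_filter, Finset.mem_product]
            exact ⟨⟨hm2, hm1⟩, v, hv2, hv1⟩
      rw [hset, Finset.card_insert_of_notMem (by simp [Prod.ext_iff, hne]),
        Finset.card_singleton]
    rw [Finset.sum_congr rfl hfib, Finset.sum_const, smul_eq_mul, mul_comm]
    rfl
  have hsplit : (S.filter fun p => p.1 = p.2).card + (S.filter fun p => p.1 ≠ p.2).card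
      = S.card := Finset.card_filter_add_card_filter_not _
  omega

end Edges

lemma two_mul_choose_two (m : ℕ) : 2 * m.choose 2 + m = m * m := by
  induction m with
  | zero => rfl
  | succ k ih =>
    have hc2 : (k + 1).choose 2 = k + k.choose 2 := by
      show (k + 1).choose (1 + 1) = _
      rw [Nat.choose_succ_succ, Nat.choose_one_right]
    have : (k + 1) * (k + 1) = k * k + 2 * k + 1 := by ring
    omega


end Aux

/-- Under the random coloring model with profile `c`, for distinct colors `i ≠ j`,
`cov(Mᵢ, Mⱼ) = γ(G) · cᵢ⁽²⁾ · cⱼ⁽²⁾` where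
`γ(G) = (2/n⁽⁴⁾)·(C(m,2) − π₃(G)) − (m/n⁽²⁾)²`. -/
theorem covariance_monoEdges {V : Type*} [Fintype V] [DecidableEq V]
    (G : SimpleGraph V) [DecidableRel G.Adj] (n m s : ℕ)
    (hn : Fintype.card V = n) (hn4 : 4 ≤ n) (hm : G.edgeFinset.card = m)
    (c : Fin s → ℕ) (hc : ∀ i, 0 < c i) (hsum : ∑ i, c i = n)
    (i j : Fin s) (hij : i ≠ j) :
    expect V c (fun f => (monoEdges G f i : ℝ) * (monoEdges G f j : ℝ)) -
        expect V c (fun f => (monoEdges G f i : ℝ)) *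
          expect V c (fun f => (monoEdges G f j : ℝ)) =
      (2 / (n.descFactorial 4 : ℝ) * ((m.choose 2 : ℝ) - (pi3 G : ℝ)) -
          ((m : ℝ) / (n.descFactorial 2 : ℝ)) ^ 2) *
        ((c i).descFactorial 2 : ℝ) * ((c j).descFactorial 2 : ℝ) := by
  classical
  set N : ℕ := (profileColorings V s c).card with hNdef
  set Si : ℕ := ∑ f ∈ profileColorings V s c, monoEdges G f i with hSi
  set Sj : ℕ := ∑ f ∈ profileColorings V s c, monoEdges G f j with hSj
  set Sij : ℕ := ∑ f ∈ profileColorings V s c, monoEdges G f i * monoEdges G f j with hSij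
  set D : ℕ := (disjPairs G).card with hD
  have hNpos : 0 < N :=
    Finset.card_pos.mpr (profileColorings_nonempty (hn ▸ hsum))
  have hNne : ((N : ℝ)) ≠ 0 := Nat.cast_ne_zero.mpr hNpos.ne'
  have hd2 : ((n.descFactorial 2 : ℕ) : ℝ) ≠ 0 := by
    rw [Nat.cast_ne_zero, Ne, Nat.descFactorial_eq_zero_iff_lt]; omega
  have hd4 : ((n.descFactorial 4 : ℕ) : ℝ) ≠ 0 := by
    rw [Nat.cast_ne_zero, Ne, Nat.descFactorial_eq_zero_iff_lt]; omega
  have h1 : Si * n.descFactorial 2 = m * (N * (c i).descFactorial 2) := by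
    rw [hSi, ← hn, ← hm]; exact sum_monoEdges_mul G i
  have h2 : Sj * n.descFactorial 2 = m * (N * (c j).descFactorial 2) := by
    rw [hSj, ← hn, ← hm]; exact sum_monoEdges_mul G j
  have h3 : Sij * n.descFactorial 4
      = D * (N * ((c i).descFactorial 2 * (c j).descFactorial 2)) := by
    rw [hSij, ← hn]; exact sum_prod_mul G hij
  have h4 : D + (m + 2 * pi3 G) = m * m := by rw [hD, ← hm]; exact disjPairs_card G
  have h5 : 2 * m.choose 2 + m = m * m := two_mul_choose_two m
  have r1 : (Si : ℝ) * (n.descFactorial 2 : ℝ) = m * (N * (c i).descFactorial 2) := by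
    exact_mod_cast h1
  have r2 : (Sj : ℝ) * (n.descFactorial 2 : ℝ) = m * (N * (c j).descFactorial 2) := by
    exact_mod_cast h2
  have r3 : (Sij : ℝ) * (n.descFactorial 4 : ℝ)
      = D * (N * ((c i).descFactorial 2 * (c j).descFactorial 2)) := by exact_mod_cast h3
  have r4 : (D : ℝ) + ((m : ℝ) + 2 * (pi3 G : ℝ)) = m * m := by exact_mod_cast h4
  have r5 : 2 * (m.choose 2 : ℝ) + (m : ℝ) = m * m := by exact_mod_cast h5
  have eA : expect V c (fun f => (monoEdges G f i : ℝ) * (monoEdges G f j : ℝ))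
      = (Sij : ℝ) / N := by
    rw [expect_eq, hSij]; congr 1; push_cast; rfl
  have eB : expect V c (fun f => (monoEdges G f i : ℝ)) = (Si : ℝ) / N := by
    rw [expect_eq, hSi]; congr 1; push_cast; rfl
  have eC : expect V c (fun f => (monoEdges G f j : ℝ)) = (Sj : ℝ) / N := by
    rw [expect_eq, hSj]; congr 1; push_cast; rfl
  rw [eA, eB, eC]
  have hDr : (D : ℝ) = 2 * (m.choose 2 : ℝ) - 2 * (pi3 G : ℝ) := by linarith
  have A : (Sij : ℝ) / N
      = (D : ℝ) * ((c i).descFactorial 2 * (c j).descFactorial 2) / (n.descFactorial 4 : ℝ) := by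
    rw [div_eq_div_iff hNne hd4]; linear_combination r3
  have B : (Si : ℝ) / N = (m : ℝ) * (c i).descFactorial 2 / (n.descFactorial 2 : ℝ) := by
    rw [div_eq_div_iff hNne hd2]; linear_combination r1
  have C : (Sj : ℝ) / N = (m : ℝ) * (c j).descFactorial 2 / (n.descFactorial 2 : ℝ) := by
    rw [div_eq_div_iff hNne hd2]; linear_combination r2
  rw [A, B, C, hDr]
  field_simp
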